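/- arXiv:1707.02251 — 3 statements merged into one kernel-verified Lean document; each statement's English description precedes it below -/
import Mathlib

section
/- Let γ₁, γ₂, γ₃ : [0,1] → ℂ be continuous paths with γ₁(0) = γ₂(0) = γ₃(0) and γ₁(1) = γ₂(1) = γ₃(1), let H₁ be a homotopy from γ₁ to γ₂ and H₂ a homotopy from γ₂ to γ₃. Then for every x ∈ ℂ one has E_{H₁+H₂}(x) ≤ E_{H₁}(x) + E_{H₂}(x) in ℕ∞. -/
/-!
The fiber of `H₁.trans H₂` over `x` is covered by the images of the fibers of `H₁` and `H₂`
under the continuous reparametrisations `(s, t) ↦ (s / 2, t)` and `(s, t) ↦ ((s + 1) / 2, t)`.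
A continuous map sends each connected component into a single component, so the components of
the two fibers map onto the components of the fiber of `H₁.trans H₂`.
-/

open MeasureTheory unitInterval ENNReal

noncomputable section

/-- `homE H p` is the number of connected components of the fiber `H⁻¹({p})`,
as an extended natural number. -/
def homE {a b : ℂ} {γ₁ γ₂ : Path a b} (H : Path.Homotopy γ₁ γ₂) (p : ℂ) : ℕ∞ :=
  ENat.card (ConnectedComponents ↥(⇑H ⁻¹' {p}))

/-- The homotopy area `Area(H) = ∫⁻ x, E_H(x)`. -/
def homArea {a b : ℂ} {γ₁ γ₂ : Path a b} (H : Path.Homotopy γ₁ γ₂) : ℝ≥0∞ :=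
  ∫⁻ p, (homE H p : ℝ≥0∞)

/-- The minimum homotopy area `σ(γ₁, γ₂)`, the infimum of `Area(H)` over all
homotopies rel endpoints from `γ₁` to `γ₂`. -/
def minHomArea {a b : ℂ} (γ₁ γ₂ : Path a b) : ℝ≥0∞ :=
  ⨅ H : Path.Homotopy γ₁ γ₂, homArea H

open Set Function

theorem ENat.card_le_card_of_surjective {α β : Type*} {f : α → β} (hf : Surjective f) :
    ENat.card β ≤ ENat.card α := by
  simpa [ENat.card] using Cardinal.toENat.monotone' (Cardinal.lift_mk_le_lift_mk_of_surjective hf)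

section ConnectedComponents

variable {X Y Z : Type*} [TopologicalSpace X] [TopologicalSpace Y] [TopologicalSpace Z]

theorem ENat.card_connectedComponents_le_add {f : X → Z} {g : Y → Z} (hf : Continuous f)
    (hg : Continuous g) (hfg : range f ∪ range g = univ) :
    ENat.card (ConnectedComponents Z) ≤
      ENat.card (ConnectedComponents X) + ENat.card (ConnectedComponents Y) := by
  rw [← ENat.card_sum]
  refine ENat.card_le_card_of_surjective
    (f := Sum.elim hf.connectedComponentsMap hg.connectedComponentsMap) ?_
  refine ConnectedComponents.surjective_coe.forall.2 fun z => ?_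
  rcases hfg.symm ▸ mem_univ z with ⟨x, rfl⟩ | ⟨y, rfl⟩
  exacts [⟨.inl x, rfl⟩, ⟨.inr y, rfl⟩]

theorem ENat.card_connectedComponents_preimage_le_add {W : Type*} {F : Z → W} {φ : X → Z}
    {ψ : Y → Z} (hφ : Continuous φ) (hψ : Continuous ψ) (hcover : range φ ∪ range ψ = univ)
    (S : Set W) :
    ENat.card (ConnectedComponents (F ⁻¹' S)) ≤
      ENat.card (ConnectedComponents ((F ∘ φ) ⁻¹' S)) +
        ENat.card (ConnectedComponents ((F ∘ ψ) ⁻¹' S)) := by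
  refine ENat.card_connectedComponents_le_add (hφ.restrict (mapsTo_preimage φ (F ⁻¹' S)))
    (hψ.restrict (mapsTo_preimage ψ (F ⁻¹' S))) (eq_univ_of_forall fun ⟨z, hz⟩ => ?_)
  rcases hcover.symm ▸ mem_univ z with ⟨x, rfl⟩ | ⟨y, rfl⟩
  exacts [.inl ⟨⟨x, hz⟩, rfl⟩, .inr ⟨⟨y, hz⟩, rfl⟩]

end ConnectedComponents

namespace unitInterval

def firstHalf (s : I) : I :=
  ⟨s / 2, by constructor <;> linarith [s.2.1, s.2.2]⟩

def secondHalf (s : I) : I :=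
  ⟨(s + 1) / 2, by constructor <;> linarith [s.2.1, s.2.2]⟩

@[simp] theorem coe_firstHalf (s : I) : (firstHalf s : ℝ) = s / 2 := rfl

@[simp] theorem coe_secondHalf (s : I) : (secondHalf s : ℝ) = (s + 1) / 2 := rfl

@[fun_prop] theorem continuous_firstHalf : Continuous firstHalf := by
  unfold firstHalf; fun_prop

@[fun_prop] theorem continuous_secondHalf : Continuous secondHalf := by
  unfold secondHalf; fun_prop

theorem range_firstHalf_union_range_secondHalf : range firstHalf ∪ range secondHalf = univ := by
  refine eq_univ_of_forall fun t => ?_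
  by_cases ht : (t : ℝ) ≤ 1 / 2
  · refine .inl ⟨⟨2 * t, (mul_pos_mem_iff zero_lt_two).2 ⟨t.2.1, ht⟩⟩, Subtype.ext ?_⟩
    simp
  · refine .inr ⟨⟨2 * t - 1, two_mul_sub_one_mem_iff.2 ⟨(not_le.1 ht).le, t.2.2⟩⟩, Subtype.ext ?_⟩
    simp

end unitInterval

namespace ContinuousMap.Homotopy

variable {X Y : Type*} [TopologicalSpace X] [TopologicalSpace Y] {f₀ f₁ f₂ : C(X, Y)}

@[simp] theorem trans_firstHalf (F : Homotopy f₀ f₁) (G : Homotopy f₁ f₂) (s : I) (x : X) :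
    F.trans G (firstHalf s, x) = F (s, x) := by
  rw [trans_apply, dif_pos (by simp only [coe_firstHalf]; linarith [s.2.2])]
  congr
  simp only [coe_firstHalf]
  ring

@[simp] theorem trans_secondHalf (F : Homotopy f₀ f₁) (G : Homotopy f₁ f₂) (s : I) (x : X) :
    F.trans G (secondHalf s, x) = G (s, x) := by
  rw [trans_apply]
  split_ifs with h
  · obtain rfl : s = 0 := Subtype.ext (le_antisymm (by simp only [coe_secondHalf, Icc.coe_zero] at h ⊢; linarith) s.2.1)
    rw [G.apply_zero, ← F.apply_one]
    congr
    norm_num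
  · congr
    simp only [coe_secondHalf]
    ring

end ContinuousMap.Homotopy

/-- For a concatenation of homotopies, the number of sweeps over any point is at most
the sum of the numbers of sweeps of the pieces. -/
theorem stmt_0 {a b : ℂ} (γ₁ γ₂ γ₃ : Path a b)
    (H₁ : Path.Homotopy γ₁ γ₂) (H₂ : Path.Homotopy γ₂ γ₃) (x : ℂ) :
    homE (H₁.trans H₂) x ≤ homE H₁ x + homE H₂ x := by
  have h₁ : ⇑(H₁.trans H₂) ∘ Prod.map firstHalf id = ⇑H₁ :=
    funext fun p => H₁.toHomotopy.trans_firstHalf H₂.toHomotopy p.1 p.2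
  have h₂ : ⇑(H₁.trans H₂) ∘ Prod.map secondHalf id = ⇑H₂ :=
    funext fun p => H₁.toHomotopy.trans_secondHalf H₂.toHomotopy p.1 p.2
  have hcover : range (Prod.map firstHalf id) ∪ range (Prod.map secondHalf id) =
      (univ : Set (I × I)) := by
    rw [range_prodMap, range_prodMap, range_id, ← union_prod,
      range_firstHalf_union_range_secondHalf, univ_prod_univ]
  unfold homE
  rw [← h₁, ← h₂]
  exact ENat.card_connectedComponents_preimage_le_add (by fun_prop) (by fun_prop) hcover {x}
end
end

section
/- Let γ₁, γ₂, γ₃ : [0,1] → ℂ be continuous paths with γ₁(0) = γ₂(0) = γ₃(0) and γ₁(1) = γ₂(1) = γ₃(1), let H₁ be a homotopy from γ₁ to γ₂ and H₂ a homotopy from γ₂ to γ₃. Then for every x ∈ ℂ with x ∉ range γ₂ one has E_{H₁+H₂}(x) = E_{H₁}(x) + E_{H₂}(x) in ℕ∞. -/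
open MeasureTheory unitInterval ENNReal

noncomputable section

/-!
Off the middle path, the fiber of `H₁ + H₂` splits: its points with `s < 1/2` are a rescaled
copy of the fiber of `H₁`, those with `s > 1/2` a rescaled copy of the fiber of `H₂`, and it has
no points with `s = 1/2`, where the concatenation runs along `γ₂`. The rescaling map from the
disjoint union of the two fibers is thus a continuous bijection between compact Hausdorff spaces,
hence a homeomorphism, and the components of a disjoint union are those of its summands.
-/

open Function Set

section ConnectedComponents

variable {X Y : Type*} [TopologicalSpace X] [TopologicalSpace Y]

def Homeomorph.connectedComponentsCongr (h : X ≃ₜ Y) :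
    ConnectedComponents X ≃ ConnectedComponents Y where
  toFun := h.continuous.connectedComponentsMap
  invFun := h.symm.continuous.connectedComponentsMap
  left_inv z := by
    obtain ⟨p, rfl⟩ := ConnectedComponents.surjective_coe z
    simp [Continuous.connectedComponentsMap_mk]
  right_inv z := by
    obtain ⟨p, rfl⟩ := ConnectedComponents.surjective_coe z
    simp [Continuous.connectedComponentsMap_mk]

variable (X Y) in
def ConnectedComponents.sumEquiv :
    ConnectedComponents (X ⊕ Y) ≃ ConnectedComponents X ⊕ ConnectedComponents Y where
  toFun := Continuous.connectedComponentsLift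
    ((continuous_inl.comp ConnectedComponents.continuous_coe).sumElim
      (continuous_inr.comp ConnectedComponents.continuous_coe))
  invFun := Sum.elim continuous_inl.connectedComponentsMap continuous_inr.connectedComponentsMap
  left_inv z := by
    obtain ⟨p | p, rfl⟩ := ConnectedComponents.surjective_coe z <;> rfl
  right_inv := by
    rintro (z | z) <;> obtain ⟨p, rfl⟩ := ConnectedComponents.surjective_coe z <;> rfl

theorem ENat.card_connectedComponents_sum :
    ENat.card (ConnectedComponents (X ⊕ Y)) =
      ENat.card (ConnectedComponents X) + ENat.card (ConnectedComponents Y) := by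
  rw [ENat.card_congr (ConnectedComponents.sumEquiv X Y), ENat.card_sum]

theorem Continuous.card_connectedComponents_eq_of_bijective [CompactSpace X] [T2Space Y]
    {f : X → Y} (hf : Continuous f) (hbij : Bijective f) :
    ENat.card (ConnectedComponents X) = ENat.card (ConnectedComponents Y) :=
  ENat.card_congr
    (hf.homeoOfEquivCompactToT2 (f := Equiv.ofBijective f hbij)).connectedComponentsCongr

end ConnectedComponents

namespace unitInterval

def lowerHalf (s : I) : I := ⟨s / 2, by linarith [s.2.1], by linarith [s.2.2]⟩

def upperHalf (s : I) : I := ⟨(s + 1) / 2, by linarith [s.2.1], by linarith [s.2.2]⟩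

@[simp] theorem coe_lowerHalf (s : I) : (lowerHalf s : ℝ) = s / 2 := rfl

@[simp] theorem coe_upperHalf (s : I) : (upperHalf s : ℝ) = (s + 1) / 2 := rfl

@[fun_prop] theorem continuous_lowerHalf : Continuous lowerHalf := by
  unfold lowerHalf; fun_prop

@[fun_prop] theorem continuous_upperHalf : Continuous upperHalf := by
  unfold upperHalf; fun_prop

theorem lowerHalf_injective : Injective lowerHalf := fun s t h => by
  ext; simpa using congrArg Subtype.val h

theorem upperHalf_injective : Injective upperHalf := fun s t h => by
  ext; simpa using congrArg Subtype.val h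

theorem lowerHalf_eq_upperHalf_iff {s t : I} : lowerHalf s = upperHalf t ↔ s = 1 ∧ t = 0 := by
  refine ⟨fun h => ?_, fun ⟨hs, ht⟩ => by ext; simp [hs, ht]⟩
  have h' : (s : ℝ) / 2 = (t + 1) / 2 := congrArg Subtype.val h
  constructor <;> ext <;> push_cast <;> linarith [s.2.2, t.2.1]

theorem range_lowerHalf_union_range_upperHalf : range lowerHalf ∪ range upperHalf = univ := by
  refine eq_univ_of_forall fun s => ?_
  by_cases hs : (s : ℝ) ≤ 1 / 2
  · exact .inl ⟨⟨2 * s, by linarith [s.2.1], by linarith⟩, by ext; simp⟩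
  · exact .inr ⟨⟨2 * s - 1, by linarith, by linarith [s.2.2]⟩, by ext; simp⟩

end unitInterval

namespace ContinuousMap.Homotopy

open unitInterval

variable {X Y : Type*} [TopologicalSpace X] [TopologicalSpace Y] {f₀ f₁ f₂ : C(X, Y)}
  (F : Homotopy f₀ f₁) (G : Homotopy f₁ f₂)

theorem trans_apply_lowerHalf (s : I) (x : X) : F.trans G (lowerHalf s, x) = F (s, x) := by
  rw [trans_apply, dif_pos]
  · congr 2
    ext
    exact mul_div_cancel₀ _ two_ne_zero
  · change (s : ℝ) / 2 ≤ 1 / 2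
    linarith [s.2.2]

theorem trans_apply_upperHalf (s : I) (x : X) : F.trans G (upperHalf s, x) = G (s, x) := by
  rw [trans_apply]
  split_ifs with h
  · change ((s : ℝ) + 1) / 2 ≤ 1 / 2 at h
    obtain rfl : s = 0 := by ext; push_cast; linarith [s.2.1]
    rw [G.apply_zero]
    convert F.apply_one x using 3
    norm_num
  · congr 2
    ext
    change 2 * (((s : ℝ) + 1) / 2) - 1 = s
    ring

def transFiberMap (y : Y) : ↥(F ⁻¹' {y}) ⊕ ↥(G ⁻¹' {y}) → ↥(F.trans G ⁻¹' {y}) :=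
  Sum.elim
    (fun p => ⟨(lowerHalf p.1.1, p.1.2), (F.trans_apply_lowerHalf G _ _).trans p.2⟩)
    (fun p => ⟨(upperHalf p.1.1, p.1.2), (F.trans_apply_upperHalf G _ _).trans p.2⟩)

@[simp] theorem coe_transFiberMap_inl {y : Y} (p : ↥(F ⁻¹' {y})) :
    (F.transFiberMap G y (.inl p) : I × X) = (lowerHalf p.1.1, p.1.2) := rfl

@[simp] theorem coe_transFiberMap_inr {y : Y} (p : ↥(G ⁻¹' {y})) :
    (F.transFiberMap G y (.inr p) : I × X) = (upperHalf p.1.1, p.1.2) := rfl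

theorem continuous_transFiberMap (y : Y) : Continuous (F.transFiberMap G y) :=
  Continuous.sumElim (by fun_prop) (by fun_prop)

theorem bijective_transFiberMap {y : Y} (hy : y ∉ range f₁) :
    Bijective (F.transFiberMap G y) := by
  have hG : ∀ x, G (0, x) ≠ y := fun x h => hy ⟨x, by simpa using h⟩
  refine ⟨?_, ?_⟩
  · rintro (⟨⟨s, x⟩, hs⟩ | ⟨⟨s, x⟩, hs⟩) (⟨⟨t, x'⟩, ht⟩ | ⟨⟨t, x'⟩, ht⟩) h <;>
      obtain ⟨hst, rfl⟩ := by simpa only [coe_transFiberMap_inl, coe_transFiberMap_inr,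
        Prod.mk.injEq] using congrArg Subtype.val h
    · obtain rfl := lowerHalf_injective hst; rfl
    -- the two halves meet only at `lowerHalf 1 = upperHalf 0`, which lies over `f₁`
    · obtain ⟨-, rfl⟩ := lowerHalf_eq_upperHalf_iff.1 hst; exact (hG x ht).elim
    · obtain ⟨-, rfl⟩ := lowerHalf_eq_upperHalf_iff.1 hst.symm; exact (hG x hs).elim
    · obtain rfl := upperHalf_injective hst; rfl
  · rintro ⟨⟨s, x⟩, hs⟩
    obtain ⟨r, rfl⟩ | ⟨r, rfl⟩ := range_lowerHalf_union_range_upperHalf ▸ mem_univ s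
    · exact ⟨.inl ⟨(r, x), (F.trans_apply_lowerHalf G r x).symm.trans hs⟩, rfl⟩
    · exact ⟨.inr ⟨(r, x), (F.trans_apply_upperHalf G r x).symm.trans hs⟩, rfl⟩

theorem card_connectedComponents_trans_fiber [CompactSpace X] [T2Space X] [T1Space Y] {y : Y}
    (hy : y ∉ range f₁) :
    ENat.card (ConnectedComponents ↥(F.trans G ⁻¹' {y})) =
      ENat.card (ConnectedComponents ↥(F ⁻¹' {y})) +
        ENat.card (ConnectedComponents ↥(G ⁻¹' {y})) := by
  have : CompactSpace ↥(F ⁻¹' {y}) :=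
    isCompact_iff_compactSpace.mp (isClosed_singleton.preimage F.continuous).isCompact
  have : CompactSpace ↥(G ⁻¹' {y}) :=
    isCompact_iff_compactSpace.mp (isClosed_singleton.preimage G.continuous).isCompact
  rw [← ENat.card_connectedComponents_sum]
  exact ((F.continuous_transFiberMap G y).card_connectedComponents_eq_of_bijective
    (F.bijective_transFiberMap G hy)).symm

end ContinuousMap.Homotopy

/-- For a point not on the middle curve, the number of sweeps of a concatenated homotopy
is exactly the sum of the numbers of sweeps of the pieces. -/
theorem stmt_1 {a b : ℂ} (γ₁ γ₂ γ₃ : Path a b)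
    (H₁ : Path.Homotopy γ₁ γ₂) (H₂ : Path.Homotopy γ₂ γ₃) (x : ℂ)
    (hx : x ∉ Set.range γ₂) :
    homE (H₁.trans H₂) x = homE H₁ x + homE H₂ x :=
  H₁.toHomotopy.card_connectedComponents_trans_fiber H₂.toHomotopy hx
end
end

section
/- Let F : ℂ → ℂ be a positive immersion of the closed unit disk that is moreover C² on an open neighborhood of the disk, and let C(t) = F(exp(2πit)) be its boundary loop. Then C′(t) ≠ 0 for all t ∈ ℝ, and the Whitney index of C equals one: (1/(2πi)) ∫₀¹ C″(t)/C′(t) dt = 1. -/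
open MeasureTheory unitInterval ENNReal

noncomputable section

/-- The restriction of a loop `C : ℝ → ℂ` (with `C 0 = C 1 = p`) to `[0,1]`,
as a `Path p p`. -/
def pathOfLoopAt (C : ℝ → ℂ) (p : ℂ) (hC : Continuous C) (h0 : C 0 = p) (h1 : C 1 = p) :
    Path p p where
  toFun t := C t
  continuous_toFun := hC.comp continuous_subtype_val
  source' := by simpa using h0
  target' := by simpa using h1

open Classical in
/-- The winding number `wn(x, C) = (1/(2πi)) ∫₀¹ C′(t)/(C(t) − x) dt` of a loop `C`
about a point `x ∉ C(ℝ)`; it is defined to be `0` for `x ∈ C(ℝ)`. -/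
def windingNumber (C : ℝ → ℂ) (x : ℂ) : ℂ :=
  if x ∈ Set.range C then 0
  else (1 / (2 * (Real.pi : ℂ) * Complex.I)) * ∫ t in (0:ℝ)..1, deriv C t / (C t - x)

/-- The winding area `W(C) = ∫⁻ x, ‖wn(x,C)‖`. -/
def windArea (C : ℝ → ℂ) : ℝ≥0∞ :=
  ∫⁻ x, (‖windingNumber C x‖₊ : ℝ≥0∞)

/-- `F : ℂ → ℂ` is an immersion of the closed unit disk if it is `C¹` on an open
neighborhood of the disk and its real Fréchet derivative is injective at every
point of the disk. -/
def IsDiskImmersion (F : ℂ → ℂ) : Prop :=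
  ∃ U : Set ℂ, IsOpen U ∧ Metric.closedBall (0:ℂ) 1 ⊆ U ∧ ContDiffOn ℝ 1 F U ∧
    ∀ z ∈ Metric.closedBall (0:ℂ) 1, Function.Injective (fderiv ℝ F z)

/-- A positive immersion of the closed unit disk: additionally the determinant of the
real derivative is positive at every point of the disk. -/
def IsPosDiskImmersion (F : ℂ → ℂ) : Prop :=
  ∃ U : Set ℂ, IsOpen U ∧ Metric.closedBall (0:ℂ) 1 ⊆ U ∧ ContDiffOn ℝ 1 F U ∧
    ∀ z ∈ Metric.closedBall (0:ℂ) 1,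
      Function.Injective (fderiv ℝ F z) ∧ 0 < LinearMap.det (fderiv ℝ F z).toLinearMap

/-!
Write `DF_w v = a(w) v + b(w) v̄`; then `det DF_w = |a|² - |b|²`, so positivity means `|b| < |a|`
on the disk. With `z = exp (2πit)` the velocity of the boundary loop is `2πi (a(z) z - b(z) z̄)`,
and `L_s(t) = 2πi (a(sz) z - s b(sz) z̄)`, `0 ≤ s ≤ 1`, deforms it through loops avoiding `0`
(since `|s b| < |a|`) into `L_0(t) = 2πi a(0) z`, whose index is `1`. The index
`(2πi)⁻¹ ∫₀¹ L_s'/L_s` is an integer, because `exp (-∫₀ᵗ L_s'/L_s) L_s(t)` is constant in `t`,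
and it is continuous in `s`, hence constant.
-/

open Real Set

def unitLoop (t : ℝ) : ℂ := Complex.exp (2 * π * Complex.I * t)

theorem hasDerivAt_unitLoop (t : ℝ) : HasDerivAt unitLoop (2 * π * Complex.I * unitLoop t) t := by
  refine (((hasDerivAt_id t).ofReal_comp.const_mul (2 * π * Complex.I)).cexp).congr_deriv ?_
  simp only [unitLoop, id, Complex.ofReal_one, mul_one]
  ring

theorem contDiff_unitLoop {n : WithTop ℕ∞} : ContDiff ℝ n unitLoop :=
  (contDiff_const.mul Complex.ofRealCLM.contDiff).cexp

theorem norm_unitLoop (t : ℝ) : ‖unitLoop t‖ = 1 := by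
  simp [unitLoop, Complex.norm_exp]

theorem unitLoop_zero : unitLoop 0 = 1 := by simp [unitLoop]

theorem unitLoop_one : unitLoop 1 = 1 := by simp [unitLoop]

theorem smul_unitLoop_mem_closedBall {s : ℝ} (hs : s ∈ Icc (0 : ℝ) 1) (t : ℝ) :
    s • unitLoop t ∈ Metric.closedBall (0 : ℂ) 1 := by
  rw [mem_closedBall_zero_iff, norm_smul, norm_unitLoop, mul_one, Real.norm_of_nonneg hs.1]
  exact hs.2

namespace ContinuousLinearMap

def dzCoeff (L : ℂ →L[ℝ] ℂ) : ℂ := (L 1 - Complex.I * L Complex.I) / 2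

def dzbarCoeff (L : ℂ →L[ℝ] ℂ) : ℂ := (L 1 + Complex.I * L Complex.I) / 2

theorem apply_eq_dzCoeff_add_dzbarCoeff (L : ℂ →L[ℝ] ℂ) (v : ℂ) :
    L v = L.dzCoeff * v + L.dzbarCoeff * (starRingEnd ℂ) v := by
  have hv : L v = v.re * L 1 + v.im * L Complex.I := by
    conv_lhs => rw [← Complex.re_add_im v]
    rw [← Complex.real_smul, ← Complex.real_smul, ← mul_one (v.re : ℂ), ← Complex.real_smul,
      map_add, map_smul, map_smul, Complex.real_smul, Complex.real_smul]
  rw [hv, dzCoeff, dzbarCoeff]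
  conv_rhs => rw [← Complex.re_add_im v]
  simp only [map_add, map_mul, Complex.conj_ofReal, Complex.conj_I]
  linear_combination (v.im : ℂ) * L Complex.I * Complex.I_sq

theorem det_eq_sq_norm_dzCoeff_sub (L : ℂ →L[ℝ] ℂ) :
    LinearMap.det L.toLinearMap = ‖L.dzCoeff‖ ^ 2 - ‖L.dzbarCoeff‖ ^ 2 := by
  rw [← LinearMap.det_toMatrix Complex.basisOneI]
  simp only [Matrix.det_fin_two, LinearMap.toMatrix_apply, Complex.coe_basisOneI_repr,
    Complex.coe_basisOneI, Matrix.cons_val_zero, Matrix.cons_val_one,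
    ContinuousLinearMap.coe_coe, dzCoeff, dzbarCoeff, Complex.sq_norm,
    Complex.normSq_apply, Complex.div_re, Complex.div_im, Complex.sub_re, Complex.sub_im,
    Complex.add_re, Complex.add_im, Complex.mul_re, Complex.mul_im, Complex.I_re, Complex.I_im,
    Complex.re_ofNat, Complex.im_ofNat]
  ring

theorem norm_dzbarCoeff_lt_of_det_pos {L : ℂ →L[ℝ] ℂ} (h : 0 < LinearMap.det L.toLinearMap) :
    ‖L.dzbarCoeff‖ < ‖L.dzCoeff‖ := by
  rw [det_eq_sq_norm_dzCoeff_sub, sub_pos] at h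
  exact lt_of_pow_lt_pow_left₀ 2 (norm_nonneg _) h

end ContinuousLinearMap

theorem exists_int_integral_div_eq_mul_two_pi_I {γ γ' : ℝ → ℂ} {a b : ℝ}
    (hγ : ∀ t, HasDerivAt γ (γ' t) t) (hγ' : Continuous γ') (hne : ∀ t, γ t ≠ 0)
    (hper : γ b = γ a) :
    ∃ n : ℤ, ∫ t in a..b, γ' t / γ t = n * (2 * π * Complex.I) := by
  have hcont : Continuous fun t => γ' t / γ t :=
    hγ'.div (continuous_iff_continuousAt.2 fun t => (hγ t).continuousAt) hne
  set φ : ℝ → ℂ := fun τ => ∫ t in a..τ, γ' t / γ t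
  have hφ : ∀ τ, HasDerivAt φ (γ' τ / γ τ) τ := fun τ =>
    intervalIntegral.integral_hasDerivAt_right (hcont.intervalIntegrable _ _)
      (hcont.stronglyMeasurableAtFilter _ _) hcont.continuousAt
  have hconst : ∀ τ, HasDerivAt (fun τ => Complex.exp (-φ τ) * γ τ) 0 τ := by
    intro τ
    refine (((hφ τ).neg.cexp).mul (hγ τ)).congr_deriv ?_
    rw [mul_neg, neg_mul, mul_assoc, div_mul_cancel₀ _ (hne τ), neg_add_cancel]
  have hab := is_const_of_deriv_eq_zero (fun τ => (hconst τ).differentiableAt)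
    (fun τ => (hconst τ).deriv) b a
  simp only [φ, intervalIntegral.integral_same, neg_zero, Complex.exp_zero, one_mul, hper] at hab
  obtain ⟨n, hn⟩ := Complex.exp_eq_one_iff.1 ((mul_eq_right₀ (hne a)).1 hab)
  exact ⟨-n, by push_cast; linear_combination -hn⟩

theorem integral_div_eq_of_homotopy {L L' : ℝ × ℝ → ℂ}
    (hL : ContinuousOn L (Icc 0 1 ×ˢ univ)) (hL' : ContinuousOn L' (Icc 0 1 ×ˢ univ))
    (hderiv : ∀ s ∈ Icc (0 : ℝ) 1, ∀ t, HasDerivAt (fun t => L (s, t)) (L' (s, t)) t)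
    (hne : ∀ s ∈ Icc (0 : ℝ) 1, ∀ t, L (s, t) ≠ 0)
    (hper : ∀ s ∈ Icc (0 : ℝ) 1, L (s, 1) = L (s, 0)) :
    ∫ t in (0 : ℝ)..1, L' (0, t) / L (0, t) = ∫ t in (0 : ℝ)..1, L' (1, t) / L (1, t) := by
  set J : ℝ → ℂ := fun s => (2 * π * Complex.I)⁻¹ * ∫ t in (0 : ℝ)..1, L' (s, t) / L (s, t)
  have hJ : ContinuousOn J (Icc 0 1) := by
    rw [continuousOn_iff_continuous_domRestrict]
    refine continuous_const.mul
      (intervalIntegral.continuous_parametric_intervalIntegral_of_continuous' ?_ 0 1)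
    exact (hL'.div hL fun p hp => hne p.1 hp.1 p.2).comp_continuous
      (continuous_subtype_val.prodMap continuous_id) fun p => ⟨p.1.2, trivial⟩
  have hJℤ : MapsTo J (Icc 0 1) (range ((↑) : ℤ → ℂ)) := by
    intro s hs
    obtain ⟨n, hn⟩ := exists_int_integral_div_eq_mul_two_pi_I (hderiv s hs)
      (hL'.comp_continuous (continuous_const.prodMk continuous_id) fun t => ⟨hs, trivial⟩)
      (hne s hs) (hper s hs)
    refine ⟨n, ?_⟩
    simp only [J, hn]
    field_simp
  have h01 := isPreconnected_Icc.constant_of_mapsTo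
    Complex.isClosedEmbedding_intCast.isInducing.isDiscrete_range hJ hJℤ
    (left_mem_Icc.2 zero_le_one) (right_mem_Icc.2 zero_le_one)
  exact mul_left_cancel₀ (by simp [pi_ne_zero]) h01

section BoundaryHomotopy

variable {F : ℂ → ℂ}

def boundaryHomotopy (F : ℂ → ℂ) (p : ℝ × ℝ) : ℂ :=
  2 * π * Complex.I * ((fderiv ℝ F (p.1 • unitLoop p.2)).dzCoeff * unitLoop p.2 -
    p.1 * (fderiv ℝ F (p.1 • unitLoop p.2)).dzbarCoeff * (starRingEnd ℂ) (unitLoop p.2))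

theorem contDiffOn_boundaryHomotopy {V : Set ℂ} (hV : IsOpen V) (hF : ContDiffOn ℝ 2 F V) :
    ContDiffOn ℝ 1 (boundaryHomotopy F) ((fun p : ℝ × ℝ => p.1 • unitLoop p.2) ⁻¹' V) := by
  have hz : ContDiff ℝ 1 fun p : ℝ × ℝ => unitLoop p.2 := contDiff_unitLoop.comp contDiff_snd
  have hDF : ContDiffOn ℝ 1 (fun p : ℝ × ℝ => fderiv ℝ F (p.1 • unitLoop p.2))
      ((fun p : ℝ × ℝ => p.1 • unitLoop p.2) ⁻¹' V) :=
    (hF.fderiv_of_isOpen hV (by norm_num)).comp (contDiff_fst.smul hz).contDiffOn fun _ hp => hp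
  have h1 := hDF.clm_apply (contDiffOn_const (c := (1 : ℂ)))
  have hI := hDF.clm_apply (contDiffOn_const (c := Complex.I))
  have hs : ContDiff ℝ 1 fun p : ℝ × ℝ => (p.1 : ℂ) := Complex.ofRealCLM.contDiff.comp contDiff_fst
  have hz' : ContDiff ℝ 1 fun p : ℝ × ℝ => (starRingEnd ℂ) (unitLoop p.2) :=
    Complex.conjCLE.contDiff.comp hz
  unfold boundaryHomotopy ContinuousLinearMap.dzCoeff ContinuousLinearMap.dzbarCoeff
  exact contDiffOn_const.mul
    ((((h1.sub (contDiffOn_const.mul hI)).div_const 2).mul hz.contDiffOn).sub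
      ((hs.contDiffOn.mul ((h1.add (contDiffOn_const.mul hI)).div_const 2)).mul hz'.contDiffOn))

theorem boundaryHomotopy_ne_zero
    (hdet : ∀ z ∈ Metric.closedBall (0 : ℂ) 1, 0 < LinearMap.det (fderiv ℝ F z).toLinearMap)
    {s : ℝ} (hs : s ∈ Icc (0 : ℝ) 1) (t : ℝ) : boundaryHomotopy F (s, t) ≠ 0 := by
  set D := fderiv ℝ F (s • unitLoop t)
  have hlt : ‖D.dzbarCoeff‖ < ‖D.dzCoeff‖ :=
    ContinuousLinearMap.norm_dzbarCoeff_lt_of_det_pos (hdet _ (smul_unitLoop_mem_closedBall hs t))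
  refine mul_ne_zero (by simp [pi_ne_zero]) (sub_ne_zero.2 fun h => hlt.not_ge ?_)
  dsimp only at h
  calc ‖D.dzCoeff‖ = ‖D.dzCoeff * unitLoop t‖ := by rw [norm_mul, norm_unitLoop, mul_one]
    _ = s * ‖D.dzbarCoeff‖ := by
        rw [h, norm_mul, norm_mul, Complex.norm_conj, norm_unitLoop, mul_one,
          Complex.norm_real, Real.norm_of_nonneg hs.1]
    _ ≤ ‖D.dzbarCoeff‖ := mul_le_of_le_one_left (norm_nonneg _) hs.2

theorem boundaryHomotopy_mk_one (s : ℝ) :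
    boundaryHomotopy F (s, 1) = boundaryHomotopy F (s, 0) := by
  simp only [boundaryHomotopy, unitLoop_one, unitLoop_zero]

theorem hasDerivAt_comp_unitLoop {t : ℝ} (hF : DifferentiableAt ℝ F (unitLoop t)) :
    HasDerivAt (fun t => F (unitLoop t)) (boundaryHomotopy F (1, t)) t := by
  refine (hF.hasFDerivAt.comp_hasDerivAt t (hasDerivAt_unitLoop t)).congr_deriv ?_
  simp only [ContinuousLinearMap.apply_eq_dzCoeff_add_dzbarCoeff, boundaryHomotopy, one_smul,
    Complex.ofReal_one, one_mul, map_mul, map_ofNat, Complex.conj_ofReal, Complex.conj_I]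
  ring

theorem hasDerivAt_boundaryHomotopy_zero (t : ℝ) :
    HasDerivAt (fun t => boundaryHomotopy F (0, t))
      (2 * π * Complex.I * boundaryHomotopy F (0, t)) t := by
  simp only [boundaryHomotopy, zero_smul, Complex.ofReal_zero, zero_mul, sub_zero]
  exact (((hasDerivAt_unitLoop t).const_mul _).const_mul _).congr_deriv (by ring)

end BoundaryHomotopy

section WhitneyIndex

variable {F : ℂ → ℂ} {V : Set ℂ}

theorem deriv_comp_unitLoop (hV : IsOpen V) (hVb : Metric.closedBall (0 : ℂ) 1 ⊆ V)
    (hF : DifferentiableOn ℝ F V) :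
    deriv (fun t => F (unitLoop t)) = fun t => boundaryHomotopy F (1, t) :=
  funext fun t => (hasDerivAt_comp_unitLoop ((hF.differentiableAt (hV.mem_nhds
    (hVb (by simp [norm_unitLoop])))))).deriv

theorem integral_deriv_deriv_div_deriv_comp_unitLoop
    (hdet : ∀ z ∈ Metric.closedBall (0 : ℂ) 1, 0 < LinearMap.det (fderiv ℝ F z).toLinearMap)
    (hV : IsOpen V) (hVb : Metric.closedBall (0 : ℂ) 1 ⊆ V) (hF : ContDiffOn ℝ 2 F V) :
    ∫ t in (0 : ℝ)..1, deriv (deriv fun t => F (unitLoop t)) t / deriv (fun t => F (unitLoop t)) t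
      = 2 * π * Complex.I := by
  set L := boundaryHomotopy F
  set Ω := (fun p : ℝ × ℝ => p.1 • unitLoop p.2) ⁻¹' V
  have hΩ : IsOpen Ω :=
    hV.preimage (continuous_fst.smul ((contDiff_unitLoop (n := 0)).continuous.comp continuous_snd))
  have hsub : Icc 0 1 ×ˢ univ ⊆ Ω := fun p hp => hVb (smul_unitLoop_mem_closedBall hp.1 p.2)
  have hL : ContDiffOn ℝ 1 L Ω := contDiffOn_boundaryHomotopy hV hF
  have hderiv : ∀ s ∈ Icc (0 : ℝ) 1, ∀ t,
      HasDerivAt (fun t => L (s, t)) (fderiv ℝ L (s, t) (0, 1)) t := fun s hs t =>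
    ((hL.differentiableOn one_ne_zero).differentiableAt (hΩ.mem_nhds (hsub ⟨hs, trivial⟩)))
      |>.hasFDerivAt.comp_hasDerivAt t ((hasDerivAt_const t s).prodMk (hasDerivAt_id t))
  have hinv := integral_div_eq_of_homotopy (hL.continuousOn.mono hsub)
    (((hL.continuousOn_fderiv_of_isOpen hΩ le_rfl).clm_apply continuousOn_const).mono hsub)
    hderiv (fun s hs => boundaryHomotopy_ne_zero hdet hs) (fun s _ => boundaryHomotopy_mk_one s)
  rw [deriv_comp_unitLoop hV hVb (hF.differentiableOn (by norm_num))]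
  calc ∫ t in (0 : ℝ)..1, deriv (fun t => L (1, t)) t / L (1, t)
      = ∫ t in (0 : ℝ)..1, fderiv ℝ L (1, t) (0, 1) / L (1, t) :=
        intervalIntegral.integral_congr fun t _ => by rw [(hderiv 1 (by simp) t).deriv]
    _ = ∫ t in (0 : ℝ)..1, fderiv ℝ L (0, t) (0, 1) / L (0, t) := hinv.symm
    _ = ∫ _ in (0 : ℝ)..1, 2 * π * Complex.I := intervalIntegral.integral_congr fun t _ => by
        rw [(hderiv 0 (by simp) t).unique (hasDerivAt_boundaryHomotopy_zero t),
          mul_div_cancel_right₀ _ (boundaryHomotopy_ne_zero hdet (by simp) t)]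
    _ = 2 * π * Complex.I := by simp

end WhitneyIndex

/-- The boundary loop of a positively immersed disk (of class `C²`) is regular and has
Whitney index `1`. -/
theorem stmt_14 (F : ℂ → ℂ) (hF : IsPosDiskImmersion F)
    (hF2 : ∃ V : Set ℂ, IsOpen V ∧ Metric.closedBall (0:ℂ) 1 ⊆ V ∧ ContDiffOn ℝ 2 F V)
    (C : ℝ → ℂ)
    (hdef : C = fun t : ℝ => F (Complex.exp (2 * (Real.pi : ℂ) * Complex.I * t))) :
    (∀ t : ℝ, deriv C t ≠ 0) ∧
      (1 / (2 * (Real.pi : ℂ) * Complex.I)) *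
          ∫ t in (0:ℝ)..1, deriv (deriv C) t / deriv C t = 1 := by
  obtain ⟨-, -, -, -, hU⟩ := hF
  have hdet z hz := (hU z hz).2
  obtain ⟨V, hV, hVb, hF2⟩ := hF2
  obtain rfl : C = fun t => F (unitLoop t) := hdef
  refine ⟨fun t => ?_, ?_⟩
  · rw [deriv_comp_unitLoop hV hVb (hF2.differentiableOn (by norm_num))]
    exact boundaryHomotopy_ne_zero hdet (by simp) t
  · rw [integral_deriv_deriv_div_deriv_comp_unitLoop hdet hV hVb hF2]
    exact one_div_mul_cancel (by simp [pi_ne_zero])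
end
end
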